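/- Localization of distortion (key estimate): let f be an orientation-preserving C¹⁺ᵇᵛ diffeomorphism of [0,1] with f(x) > x on (0,1), and p ∈ (0,1). For every N ≥ 1 and every n > 2N, |var(log Df^n) − (n−2N)·var(log Df^{2N}; [f^{-N}(p), f^{-N+1}(p)])| ≤ n·[var(log Df; [0, f^{-N}(p)]) + var(log Df; [f^{N}(p), 1])] + (4N−1)·var(log Df; [f^{-N}(p), f^{N}(p)]). -/

import Mathlib

open Filter Set

/-- Total variation of `log Df` on a set `s`. -/
noncomputable def varLogDOn (f : ℝ → ℝ) (s : Set ℝ) : ℝ :=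
  (eVariationOn (fun x => Real.log (deriv f x)) s).toReal

section AuxLemmas

lemma evar_add_le (F G : ℝ → ℝ) (s : Set ℝ) :
    eVariationOn (fun x => F x + G x) s ≤ eVariationOn F s + eVariationOn G s := by
  apply iSup_le
  rintro ⟨n, u, hu, us⟩
  calc ∑ i ∈ Finset.range n, edist (F (u (i+1)) + G (u (i+1))) (F (u i) + G (u i))
      ≤ ∑ i ∈ Finset.range n,
          (edist (F (u (i+1))) (F (u i)) + edist (G (u (i+1))) (G (u i))) :=
        Finset.sum_le_sum (fun i _ => edist_add_add_le _ _ _ _)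
    _ = ∑ i ∈ Finset.range n, edist (F (u (i+1))) (F (u i))
        + ∑ i ∈ Finset.range n, edist (G (u (i+1))) (G (u i)) := Finset.sum_add_distrib
    _ ≤ _ := add_le_add (eVariationOn.sum_le (f := F) (n := n) hu us) (eVariationOn.sum_le (f := G) (n := n) hu us)

lemma evar_neg (F : ℝ → ℝ) (s : Set ℝ) :
    eVariationOn (fun x => -F x) s = eVariationOn F s := by
  unfold eVariationOn
  congr 1 with p
  congr 1 with i
  rw [edist_neg_neg]

lemma evar_sub_le (F G : ℝ → ℝ) (s : Set ℝ) :
    eVariationOn (fun x => F x - G x) s ≤ eVariationOn F s + eVariationOn G s := by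
  have h1 : eVariationOn (fun x => F x - G x) s
      = eVariationOn (fun x => F x + -G x) s :=
    eVariationOn.eq_of_eqOn (fun x _ => by ring)
  rw [h1]
  exact le_trans (evar_add_le F (fun x => -G x) s) (by rw [evar_neg])

lemma evar_sum_le (h : ℕ → ℝ → ℝ) (t : Finset ℕ) (s : Set ℝ) :
    eVariationOn (fun x => ∑ k ∈ t, h k x) s ≤ ∑ k ∈ t, eVariationOn (h k) s := by
  classical
  induction t using Finset.induction with
  | empty =>
      simp only [Finset.sum_empty, le_refl, nonpos_iff_eq_zero]
      exact eVariationOn.constant_on (by simp [Set.Subsingleton, Set.image])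
  | insert a t ha ih =>
      calc eVariationOn (fun x => ∑ k ∈ insert a t, h k x) s
          = eVariationOn (fun x => h a x + ∑ k ∈ t, h k x) s := by
            apply eVariationOn.eq_of_eqOn; intro x _; simp [Finset.sum_insert ha]
        _ ≤ eVariationOn (h a) s + eVariationOn (fun x => ∑ k ∈ t, h k x) s := evar_add_le _ _ s
        _ ≤ eVariationOn (h a) s + ∑ k ∈ t, eVariationOn (h k) s := by gcongr
        _ = _ := (Finset.sum_insert (f := fun k => eVariationOn (h k) s) ha).symm

lemma evar_icc_add_icc (F : ℝ → ℝ) {a b c : ℝ} (hab : a ≤ b) (hbc : b ≤ c) :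
    eVariationOn F (Icc a b) + eVariationOn F (Icc b c) = eVariationOn F (Icc a c) := by
  have := eVariationOn.Icc_add_Icc F (s := univ) hab hbc (mem_univ b)
  simpa using this

variable {f g : ℝ → ℝ}

lemma my_strictMonoOn (hfd : Differentiable ℝ f)
    (hposf : ∀ x ∈ Icc (0:ℝ) 1, 0 < deriv f x) : StrictMonoOn f (Icc 0 1) :=
  strictMonoOn_of_deriv_pos (convex_Icc 0 1) hfd.continuous.continuousOn
    (fun x hx => hposf x (interior_subset hx))

lemma my_deriv_iter (hfd : Differentiable ℝ f) (k : ℕ) (x : ℝ) :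
    deriv (f^[k]) x = ∏ i ∈ Finset.range k, deriv f (f^[i] x) := by
  induction k with
  | zero => simp
  | succ k ih =>
      rw [Function.iterate_succ']
      rw [deriv_comp x (hfd _) ((hfd.iterate k) x), ih, Finset.prod_range_succ, mul_comm]

lemma my_log_deriv_iter (hfd : Differentiable ℝ f)
    (hmapsf : MapsTo f (Icc (0:ℝ) 1) (Icc (0:ℝ) 1))
    (hposf : ∀ x ∈ Icc (0:ℝ) 1, 0 < deriv f x) (k : ℕ) {x : ℝ} (hx : x ∈ Icc (0:ℝ) 1) :
    Real.log (deriv (f^[k]) x) = ∑ i ∈ Finset.range k, Real.log (deriv f (f^[i] x)) := by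
  rw [my_deriv_iter hfd k x]
  exact Real.log_prod (fun i _ => ne_of_gt (hposf _ (hmapsf.iterate i hx)))

lemma my_image_Icc (hfd : Differentiable ℝ f)
    (hposf : ∀ x ∈ Icc (0:ℝ) 1, 0 < deriv f x) {u v : ℝ}
    (hu : u ∈ Icc (0:ℝ) 1) (hv : v ∈ Icc (0:ℝ) 1) (huv : u ≤ v) :
    f '' Icc u v = Icc (f u) (f v) := by
  have hm := my_strictMonoOn hfd hposf
  apply Subset.antisymm
  · rintro _ ⟨z, hz, rfl⟩
    have hz1 : z ∈ Icc (0:ℝ) 1 := Icc_subset_Icc hu.1 hv.2 hz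
    exact ⟨hm.monotoneOn hu hz1 hz.1, hm.monotoneOn hz1 hv hz.2⟩
  · exact intermediate_value_Icc huv hfd.continuous.continuousOn

lemma my_iter_monotoneOn (hfd : Differentiable ℝ f)
    (hmapsf : MapsTo f (Icc (0:ℝ) 1) (Icc (0:ℝ) 1))
    (hposf : ∀ x ∈ Icc (0:ℝ) 1, 0 < deriv f x) (k : ℕ) :
    MonotoneOn (f^[k]) (Icc (0:ℝ) 1) := by
  have : StrictMonoOn (f^[k]) (Icc (0:ℝ) 1) := by
    induction k with
    | zero => simpa using strictMonoOn_id
    | succ k ih =>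
        rw [Function.iterate_succ']
        exact StrictMonoOn.comp (my_strictMonoOn hfd hposf) ih (hmapsf.iterate k)
  exact this.monotoneOn

lemma my_image_Icc_iter (hfd : Differentiable ℝ f)
    (hmapsf : MapsTo f (Icc (0:ℝ) 1) (Icc (0:ℝ) 1))
    (hposf : ∀ x ∈ Icc (0:ℝ) 1, 0 < deriv f x) (k : ℕ) {u v : ℝ}
    (hu : u ∈ Icc (0:ℝ) 1) (hv : v ∈ Icc (0:ℝ) 1) (huv : u ≤ v) :
    f^[k] '' Icc u v = Icc (f^[k] u) (f^[k] v) := by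
  induction k with
  | zero => simp
  | succ k ih =>
      rw [Function.iterate_succ', Function.comp_apply, Function.comp_apply, image_comp, ih]
      exact my_image_Icc hfd hposf (hmapsf.iterate k hu) (hmapsf.iterate k hv)
        (my_iter_monotoneOn hfd hmapsf hposf k hu hv huv)

lemma my_f_Ioo (hfd : Differentiable ℝ f) (hf1 : f 1 = 1)
    (hposf : ∀ x ∈ Icc (0:ℝ) 1, 0 < deriv f x)
    (hmove : ∀ x ∈ Ioo (0:ℝ) 1, x < f x) : MapsTo f (Ioo (0:ℝ) 1) (Ioo (0:ℝ) 1) := by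
  intro x hx
  have hx1 : x ∈ Icc (0:ℝ) 1 := ⟨hx.1.le, hx.2.le⟩
  refine ⟨lt_trans hx.1 (hmove x hx), ?_⟩
  have := my_strictMonoOn hfd hposf hx1 (right_mem_Icc.2 zero_le_one) hx.2
  rwa [hf1] at this

lemma my_g_Ioo (hf0 : f 0 = 0) (hf1 : f 1 = 1)
    (hmapsg : MapsTo g (Icc (0:ℝ) 1) (Icc (0:ℝ) 1))
    (hfg : ∀ x ∈ Icc (0:ℝ) 1, f (g x) = x) : MapsTo g (Ioo (0:ℝ) 1) (Ioo (0:ℝ) 1) := by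
  intro x hx
  have hx1 : x ∈ Icc (0:ℝ) 1 := ⟨hx.1.le, hx.2.le⟩
  have hmem := hmapsg hx1
  have hfgx := hfg x hx1
  constructor
  · rcases lt_or_eq_of_le hmem.1 with h | h
    · exact h
    · exfalso; rw [← h, hf0] at hfgx; exact hx.1.ne hfgx
  · rcases lt_or_eq_of_le hmem.2 with h | h
    · exact h
    · exfalso; rw [h, hf1] at hfgx; exact hx.2.ne hfgx.symm

lemma my_fg_iter (hmapsg : MapsTo g (Icc (0:ℝ) 1) (Icc (0:ℝ) 1))
    (hfg : ∀ x ∈ Icc (0:ℝ) 1, f (g x) = x) (k : ℕ) :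
    ∀ x ∈ Icc (0:ℝ) 1, f^[k] (g^[k] x) = x := by
  induction k with
  | zero => intro x _; simp
  | succ k ih =>
      intro x hx
      rw [Function.iterate_succ_apply' g, Function.iterate_succ_apply f,
        hfg _ (hmapsg.iterate k hx)]
      exact ih x hx

end AuxLemmas

set_option maxHeartbeats 1000000 in
/-- Localization estimate: for a C¹⁺ᵇᵛ diffeomorphism `f` of `[0,1]` with `f x > x`
on `(0,1)` (with inverse `g`) and `p ∈ (0,1)`, for all `N ≥ 1` and `n > 2N`,
`|var(log Dfⁿ) − (n−2N)·var(log Df^{2N}; [f^{−N}p, f^{−N+1}p])|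
  ≤ n·(var(log Df; [0, f^{−N}p]) + var(log Df; [f^{N}p, 1]))
    + (4N−1)·var(log Df; [f^{−N}p, f^{N}p])`. -/
theorem stmt_16 (f g : ℝ → ℝ)
    (hfd : Differentiable ℝ f) (hgd : Differentiable ℝ g)
    (hf0 : f 0 = 0) (hf1 : f 1 = 1)
    (hmapsf : MapsTo f (Icc (0 : ℝ) 1) (Icc (0 : ℝ) 1))
    (hmapsg : MapsTo g (Icc (0 : ℝ) 1) (Icc (0 : ℝ) 1))
    (hposf : ∀ x ∈ Icc (0 : ℝ) 1, 0 < deriv f x)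
    (hgf : ∀ x ∈ Icc (0 : ℝ) 1, g (f x) = x)
    (hfg : ∀ x ∈ Icc (0 : ℝ) 1, f (g x) = x)
    (hmove : ∀ x ∈ Ioo (0 : ℝ) 1, x < f x)
    (hbv : BoundedVariationOn (fun x => Real.log (deriv f x)) (Icc (0 : ℝ) 1))
    (p : ℝ) (hp : p ∈ Ioo (0 : ℝ) 1)
    (N : ℕ) (hN : 1 ≤ N) (n : ℕ) (hn : 2 * N < n) :
    |varLogDOn (f^[n]) (Icc (0 : ℝ) 1)
        - ((n : ℝ) - 2 * N) * varLogDOn (f^[2 * N]) (Icc (g^[N] p) (g^[N - 1] p))|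
      ≤ (n : ℝ) * (varLogDOn f (Icc 0 (g^[N] p)) + varLogDOn f (Icc (f^[N] p) 1))
        + (4 * (N : ℝ) - 1) * varLogDOn f (Icc (g^[N] p) (f^[N] p)) := by
  obtain ⟨m, hm1, hnm⟩ : ∃ m, 1 ≤ m ∧ n = 2*N + m := ⟨n - 2*N, by omega, by omega⟩
  set φ : ℝ → ℝ := fun x => Real.log (deriv f x) with hφdef
  set q : ℝ := g^[N+m] p with hqdef
  set α : ℕ → ℝ := fun i => f^[i] q with hαdef
  have hqIoo : q ∈ Ioo (0:ℝ) 1 := (my_g_Ioo hf0 hf1 hmapsg hfg).iterate (N+m) hp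
  have hαIoo : ∀ i, α i ∈ Ioo (0:ℝ) 1 := fun i =>
    (my_f_Ioo hfd hf1 hposf hmove).iterate i hqIoo
  have hαIcc : ∀ i, α i ∈ Icc (0:ℝ) 1 := fun i => ⟨(hαIoo i).1.le, (hαIoo i).2.le⟩
  have hstep : ∀ i, α (i+1) = f (α i) := fun i => Function.iterate_succ_apply' f i q
  have hαmono : StrictMono α := strictMono_nat_of_lt_succ
    (fun i => by rw [hstep i]; exact hmove _ (hαIoo i))
  have hαle : ∀ {i j : ℕ}, i ≤ j → α i ≤ α j := fun h => hαmono.monotone h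
  have hαshift : ∀ k i, f^[k] (α i) = α (i + k) := by
    intro k i
    simp only [hαdef]
    rw [← Function.iterate_add_apply, Nat.add_comm]
  have hgIoo : ∀ k, g^[k] p ∈ Ioo (0:ℝ) 1 := fun k =>
    (my_g_Ioo hf0 hf1 hmapsg hfg).iterate k hp
  have hαm : α m = g^[N] p := by
    simp only [hαdef, hqdef]
    rw [show N + m = m + N from Nat.add_comm _ _, Function.iterate_add_apply g m N p]
    exact my_fg_iter hmapsg hfg m _ ⟨(hgIoo N).1.le, (hgIoo N).2.le⟩
  have hαm1 : α (m+1) = g^[N-1] p := by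
    simp only [hαdef, hqdef]
    rw [show N + m = (m+1) + (N-1) from by omega, Function.iterate_add_apply g (m+1) (N-1) p]
    exact my_fg_iter hmapsg hfg (m+1) _ ⟨(hgIoo (N-1)).1.le, (hgIoo (N-1)).2.le⟩
  have hαn : α n = f^[N] p := by
    simp only [hαdef, hqdef]
    rw [show n = N + (N + m) from by omega, Function.iterate_add_apply f N (N+m)]
    rw [my_fg_iter hmapsg hfg (N+m) p ⟨hp.1.le, hp.2.le⟩]
  set Φ : ℕ → ℝ → ℝ := fun k x => ∑ i ∈ Finset.range k, φ (f^[i] x) with hΦdef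
  have hEq : ∀ (k : ℕ) (s : Set ℝ), s ⊆ Icc 0 1 →
      eVariationOn (fun x => Real.log (deriv (f^[k]) x)) s = eVariationOn (Φ k) s :=
    fun k s hs => eVariationOn.eq_of_eqOn
      (fun x hx => my_log_deriv_iter hfd hmapsf hposf k (hs hx))
  have hcomp : ∀ (F : ℝ → ℝ) (k : ℕ) {u v : ℝ}, u ∈ Icc (0:ℝ) 1 → v ∈ Icc (0:ℝ) 1 → u ≤ v →
      eVariationOn (fun x => F (f^[k] x)) (Icc u v)
        = eVariationOn F (Icc (f^[k] u) (f^[k] v)) := by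
    intro F k u v hu hv huv
    have h1 := eVariationOn.comp_eq_of_monotoneOn F (f^[k])
      ((my_iter_monotoneOn hfd hmapsf hposf k).mono (Icc_subset_Icc hu.1 hv.2))
    rw [my_image_Icc_iter hfd hmapsf hposf k hu hv huv] at h1
    exact h1
  have tele : ∀ (F : ℝ → ℝ) (s r : ℕ),
      ∑ k ∈ Finset.range r, eVariationOn F (Icc (α (s+k)) (α (s+k+1)))
        = eVariationOn F (Icc (α s) (α (s+r))) := by
    intro F s r
    induction r with
    | zero =>
        simp only [Finset.range_zero, Finset.sum_empty, Nat.add_zero]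
        exact (eVariationOn.subsingleton F
          (by rw [Icc_self]; exact subsingleton_singleton)).symm
    | succ r ih =>
        rw [Finset.sum_range_succ, ih,
          evar_icc_add_icc F (hαle (Nat.le_add_right s r)) (hαle (Nat.le_succ _))]
        rfl
  set eA := eVariationOn (Φ n) (Icc (0:ℝ) 1) with heA
  set eB := eVariationOn (Φ (2*N)) (Icc (α m) (α (m+1))) with heB
  set eC := eVariationOn φ (Icc 0 (α m)) with heC
  set eD := eVariationOn φ (Icc (α n) 1) with heD
  set eE := eVariationOn φ (Icc (α m) (α n)) with heE
  have h0mem : (0:ℝ) ∈ Icc (0:ℝ) 1 := ⟨le_refl 0, zero_le_one⟩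
  have h1mem : (1:ℝ) ∈ Icc (0:ℝ) 1 := ⟨zero_le_one, le_refl 1⟩
  have hΦbound : ∀ (r : ℕ) {u v : ℝ}, u ∈ Icc (0:ℝ) 1 → v ∈ Icc (0:ℝ) 1 → u ≤ v →
      eVariationOn (Φ r) (Icc u v)
        ≤ ∑ k ∈ Finset.range r, eVariationOn φ (Icc (f^[k] u) (f^[k] v)) := by
    intro r u v hu hv huv
    refine le_trans (evar_sum_le (fun k x => φ (f^[k] x)) (Finset.range r) (Icc u v)) ?_
    exact le_of_eq (Finset.sum_congr rfl (fun k _ => hcomp φ k hu hv huv))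
  -- per-interval decomposition
  have hmid : ∀ i, i < m →
      (eVariationOn (Φ n) (Icc (α i) (α (i+1)))
          ≤ eVariationOn φ (Icc (α i) (α m)) + (eB + eVariationOn φ (Icc (α n) (α (n+i)))))
      ∧ (eB ≤ eVariationOn (Φ n) (Icc (α i) (α (i+1)))
          + (eVariationOn φ (Icc (α i) (α m)) + eVariationOn φ (Icc (α n) (α (n+i))))) := by
    intro i hi
    set j := m - i with hj
    have hij : i + j = m := by omega
    have hj2N : j + 2*N ≤ n := by omega
    have hu := hαIcc i
    have hv := hαIcc (i+1)
    have huv : α i ≤ α (i+1) := hαle (Nat.le_succ i)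
    set R : ℝ → ℝ := fun y => ∑ k ∈ Finset.range i, φ (f^[j+2*N+k] y) with hRdef
    have hdec : ∀ x : ℝ, Φ n x = Φ j x + (Φ (2*N) (f^[j] x) + R x) := by
      intro x
      simp only [hΦdef, hRdef]
      have middle : (∑ i' ∈ Finset.range (2*N), φ (f^[i'] (f^[j] x)))
          = ∑ k ∈ Finset.Ico j (j+2*N), φ (f^[k] x) := by
        rw [Finset.sum_Ico_eq_sum_range]
        simp only [Nat.add_sub_cancel_left]
        refine Finset.sum_congr rfl (fun k _ => ?_)
        rw [Nat.add_comm j k, Function.iterate_add_apply]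
      have tail : (∑ k ∈ Finset.range i, φ (f^[j+2*N+k] x))
          = ∑ k ∈ Finset.Ico (j+2*N) n, φ (f^[k] x) := by
        rw [Finset.sum_Ico_eq_sum_range]
        rw [show n - (j + 2*N) = i from by omega]
      rw [middle, tail,
        Finset.sum_Ico_consecutive (fun k => φ (f^[k] x)) (Nat.le_add_right j (2*N)) hj2N,
        Finset.sum_range_add_sum_Ico (fun k => φ (f^[k] x)) (by omega : j ≤ n)]
    have hL : eVariationOn (Φ j) (Icc (α i) (α (i+1)))
        ≤ eVariationOn φ (Icc (α i) (α m)) := by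
      refine le_trans (hΦbound j hu hv huv) (le_of_eq ?_)
      calc ∑ k ∈ Finset.range j, eVariationOn φ (Icc (f^[k] (α i)) (f^[k] (α (i+1))))
          = ∑ k ∈ Finset.range j, eVariationOn φ (Icc (α (i+k)) (α (i+k+1))) := by
            refine Finset.sum_congr rfl (fun k _ => ?_)
            rw [hαshift, hαshift, show i + 1 + k = i + k + 1 from by omega]
        _ = eVariationOn φ (Icc (α i) (α (i+j))) := tele φ i j
        _ = eVariationOn φ (Icc (α i) (α m)) := by rw [hij]
    have hR : eVariationOn R (Icc (α i) (α (i+1)))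
        ≤ eVariationOn φ (Icc (α n) (α (n+i))) := by
      refine le_trans (evar_sum_le (fun k x => φ (f^[j+2*N+k] x)) (Finset.range i) _)
        (le_of_eq ?_)
      calc ∑ k ∈ Finset.range i, eVariationOn (fun x => φ (f^[j+2*N+k] x)) (Icc (α i) (α (i+1)))
          = ∑ k ∈ Finset.range i, eVariationOn φ (Icc (α (n+k)) (α (n+k+1))) := by
            refine Finset.sum_congr rfl (fun k _ => ?_)
            rw [hcomp φ (j+2*N+k) hu hv huv, hαshift, hαshift,
              show i + (j+2*N+k) = n + k from by omega,
              show i + 1 + (j+2*N+k) = n + k + 1 from by omega]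
        _ = eVariationOn φ (Icc (α n) (α (n+i))) := tele φ n i
    have hM : eVariationOn (fun y => Φ (2*N) (f^[j] y)) (Icc (α i) (α (i+1))) = eB := by
      rw [hcomp (Φ (2*N)) j hu hv huv, hαshift, hαshift, hij,
        show i + 1 + j = m + 1 from by omega]
    constructor
    · calc eVariationOn (Φ n) (Icc (α i) (α (i+1)))
          = eVariationOn (fun x => Φ j x + ((fun y => Φ (2*N) (f^[j] y)) x + R x))
              (Icc (α i) (α (i+1))) := eVariationOn.eq_of_eqOn (fun x _ => hdec x)
        _ ≤ eVariationOn (Φ j) (Icc (α i) (α (i+1)))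
            + eVariationOn (fun x => (fun y => Φ (2*N) (f^[j] y)) x + R x)
                (Icc (α i) (α (i+1))) := evar_add_le _ _ _
        _ ≤ eVariationOn (Φ j) (Icc (α i) (α (i+1)))
            + (eVariationOn (fun y => Φ (2*N) (f^[j] y)) (Icc (α i) (α (i+1)))
               + eVariationOn R (Icc (α i) (α (i+1)))) := by
              gcongr
              exact evar_add_le _ _ _
        _ ≤ eVariationOn φ (Icc (α i) (α m))
            + (eB + eVariationOn φ (Icc (α n) (α (n+i)))) := by
              rw [hM]; gcongr
    · calc eB = eVariationOn (fun y => Φ (2*N) (f^[j] y)) (Icc (α i) (α (i+1))) := hM.symm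
        _ = eVariationOn (fun x => (Φ n x - Φ j x) - R x) (Icc (α i) (α (i+1))) := by
            refine eVariationOn.eq_of_eqOn (fun x _ => ?_)
            have h := hdec x
            show Φ (2*N) (f^[j] x) = Φ n x - Φ j x - R x
            linarith
        _ ≤ eVariationOn (fun x => Φ n x - Φ j x) (Icc (α i) (α (i+1)))
            + eVariationOn R (Icc (α i) (α (i+1))) := evar_sub_le _ _ _
        _ ≤ (eVariationOn (Φ n) (Icc (α i) (α (i+1)))
             + eVariationOn (Φ j) (Icc (α i) (α (i+1))))
            + eVariationOn R (Icc (α i) (α (i+1))) := by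
              gcongr
              exact evar_sub_le _ _ _
        _ ≤ eVariationOn (Φ n) (Icc (α i) (α (i+1)))
            + (eVariationOn φ (Icc (α i) (α m)) + eVariationOn φ (Icc (α n) (α (n+i)))) := by
              rw [add_assoc]
              gcongr
  -- global splitting
  have hS : ∑ i ∈ Finset.range m, eVariationOn (Φ n) (Icc (α i) (α (i+1)))
      = eVariationOn (Φ n) (Icc (α 0) (α m)) := by
    have := tele (Φ n) 0 m
    simpa using this
  have hAsplit : eA = eVariationOn (Φ n) (Icc 0 (α 0))
      + (∑ i ∈ Finset.range m, eVariationOn (Φ n) (Icc (α i) (α (i+1))))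
      + eVariationOn (Φ n) (Icc (α m) 1) := by
    rw [hS, evar_icc_add_icc (Φ n) (hαIcc 0).1 (hαle (Nat.zero_le m)),
      evar_icc_add_icc (Φ n) (hαIcc m).1 (hαIcc m).2]
  have hP1 : eVariationOn (Φ n) (Icc 0 (α 0))
      ≤ ∑ k ∈ Finset.range n, eVariationOn φ (Icc 0 (α k)) := by
    refine le_trans (hΦbound n h0mem (hαIcc 0) (hαIcc 0).1) (le_of_eq ?_)
    refine Finset.sum_congr rfl (fun k _ => ?_)
    rw [Function.iterate_fixed hf0 k, hαshift, Nat.zero_add]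
  have hP3 : eVariationOn (Φ n) (Icc (α m) 1)
      ≤ ∑ k ∈ Finset.range n, eVariationOn φ (Icc (α (m+k)) 1) := by
    refine le_trans (hΦbound n (hαIcc m) h1mem (hαIcc m).2) (le_of_eq ?_)
    refine Finset.sum_congr rfl (fun k _ => ?_)
    rw [Function.iterate_fixed hf1 k, hαshift]
  -- pairing and tails
  have hpair1 : ∑ i ∈ Finset.range m,
      (eVariationOn φ (Icc 0 (α i)) + eVariationOn φ (Icc (α i) (α m)))
      = (m : ENNReal) * eC := by
    rw [Finset.sum_congr rfl (fun i hi =>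
      evar_icc_add_icc φ (hαIcc i).1 (hαle (le_of_lt (Finset.mem_range.1 hi)))),
      Finset.sum_const, Finset.card_range, nsmul_eq_mul]
  have htail1 : ∑ k ∈ Finset.Ico m n, eVariationOn φ (Icc 0 (α k))
      ≤ ((2*N : ℕ) : ENNReal) * eC + ((2*N - 1 : ℕ) : ENNReal) * eE := by
    conv_lhs => rw [Finset.sum_Ico_eq_sum_range, show n - m = 2*N from by omega,
      show 2*N = (2*N-1) + 1 from by omega, Finset.sum_range_succ']
    have hterm : ∀ k, k < 2*N - 1 →
        eVariationOn φ (Icc 0 (α (m + (k+1)))) ≤ eC + eE := by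
      intro k hk
      rw [← evar_icc_add_icc φ (hαIcc m).1 (hαle (Nat.le_add_right m (k+1)))]
      gcongr
      exact eVariationOn.mono φ (Icc_subset_Icc le_rfl (hαle (by omega)))
    calc (∑ k ∈ Finset.range (2*N-1), eVariationOn φ (Icc 0 (α (m + (k+1)))))
          + eVariationOn φ (Icc 0 (α (m + 0)))
        ≤ (∑ _k ∈ Finset.range (2*N-1), (eC + eE)) + eC := by
          gcongr with k hk
          · exact hterm k (Finset.mem_range.1 hk)
          · rw [Nat.add_zero]
        _ = ((2*N-1 : ℕ) : ENNReal) * (eC + eE) + eC := by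
          rw [Finset.sum_const, Finset.card_range, nsmul_eq_mul]
        _ = ((2*N : ℕ) : ENNReal) * eC + ((2*N - 1 : ℕ) : ENNReal) * eE := by
          have : ((2*N : ℕ) : ENNReal) = ((2*N-1 : ℕ) : ENNReal) + 1 := by
            rw [show 2*N = (2*N-1) + 1 from by omega]
            push_cast
            ring
          rw [this]
          ring
  have hpair3 : ∑ i ∈ Finset.range m,
      (eVariationOn φ (Icc (α n) (α (n+i))) + eVariationOn φ (Icc (α (m+(2*N+i))) 1))
      = (m : ENNReal) * eD := by
    have hterm : ∀ i ∈ Finset.range m,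
        eVariationOn φ (Icc (α n) (α (n+i))) + eVariationOn φ (Icc (α (m+(2*N+i))) 1)
          = eD := by
      intro i hi
      rw [show m + (2*N+i) = n + i from by omega]
      exact evar_icc_add_icc φ (hαle (Nat.le_add_right n i)) (hαIcc (n+i)).2
    rw [Finset.sum_congr rfl hterm, Finset.sum_const, Finset.card_range, nsmul_eq_mul]
  have htail3 : ∑ k ∈ Finset.range (2*N), eVariationOn φ (Icc (α (m+k)) 1)
      ≤ ((2*N : ℕ) : ENNReal) * (eE + eD) := by
    calc ∑ k ∈ Finset.range (2*N), eVariationOn φ (Icc (α (m+k)) 1)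
        ≤ ∑ _k ∈ Finset.range (2*N), (eE + eD) := by
          refine Finset.sum_le_sum (fun k hk => ?_)
          have hk' : k < 2*N := Finset.mem_range.1 hk
          rw [← evar_icc_add_icc φ (hαle (by omega : m + k ≤ n)) (hαIcc n).2]
          gcongr
          exact eVariationOn.mono φ (Icc_subset_Icc (hαle (Nat.le_add_right m k)) le_rfl)
      _ = _ := by rw [Finset.sum_const, Finset.card_range, nsmul_eq_mul]
  -- upper bound in ENNReal
  have hUB : eA ≤ (m : ENNReal) * eB + (n : ENNReal) * eC + (n : ENNReal) * eD
      + ((4*N - 1 : ℕ) : ENNReal) * eE := by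
    calc eA ≤ (∑ k ∈ Finset.range n, eVariationOn φ (Icc 0 (α k)))
          + (∑ i ∈ Finset.range m,
              (eVariationOn φ (Icc (α i) (α m)) + (eB + eVariationOn φ (Icc (α n) (α (n+i))))))
          + (∑ k ∈ Finset.range n, eVariationOn φ (Icc (α (m+k)) 1)) := by
          rw [hAsplit]
          exact add_le_add (add_le_add hP1
            (Finset.sum_le_sum (fun i hi => (hmid i (Finset.mem_range.1 hi)).1))) hP3
      _ = ((∑ k ∈ Finset.range m, eVariationOn φ (Icc 0 (α k)))
            + (∑ k ∈ Finset.Ico m n, eVariationOn φ (Icc 0 (α k))))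
          + ((∑ i ∈ Finset.range m, eVariationOn φ (Icc (α i) (α m)))
            + ((m : ENNReal) * eB
               + (∑ i ∈ Finset.range m, eVariationOn φ (Icc (α n) (α (n+i))))))
          + ((∑ k ∈ Finset.range (2*N), eVariationOn φ (Icc (α (m+k)) 1))
            + (∑ i ∈ Finset.range m, eVariationOn φ (Icc (α (m+(2*N+i))) 1))) := by
          congr 1
          · congr 1
            · exact (Finset.sum_range_add_sum_Ico _ (by omega : m ≤ n)).symm
            · rw [Finset.sum_add_distrib, Finset.sum_add_distrib, Finset.sum_const,
                Finset.card_range, nsmul_eq_mul]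
          · rw [← Finset.sum_range_add_sum_Ico
              (fun k => eVariationOn φ (Icc (α (m+k)) 1)) (by omega : 2*N ≤ n),
              Finset.sum_Ico_eq_sum_range, show n - 2*N = m from by omega]
      _ = (m : ENNReal) * eB
          + ((∑ i ∈ Finset.range m,
              (eVariationOn φ (Icc 0 (α i)) + eVariationOn φ (Icc (α i) (α m))))
             + (∑ i ∈ Finset.range m,
              (eVariationOn φ (Icc (α n) (α (n+i))) + eVariationOn φ (Icc (α (m+(2*N+i))) 1))))
          + ((∑ k ∈ Finset.Ico m n, eVariationOn φ (Icc 0 (α k)))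
             + (∑ k ∈ Finset.range (2*N), eVariationOn φ (Icc (α (m+k)) 1))) := by
          rw [Finset.sum_add_distrib, Finset.sum_add_distrib]
          ring
      _ ≤ (m : ENNReal) * eB + ((m : ENNReal) * eC + (m : ENNReal) * eD)
          + ((((2*N : ℕ) : ENNReal) * eC + ((2*N - 1 : ℕ) : ENNReal) * eE)
             + ((2*N : ℕ) : ENNReal) * (eE + eD)) := by
          rw [hpair1, hpair3]
          gcongr
      _ = (m : ENNReal) * eB
          + ((m : ENNReal) + ((2*N : ℕ) : ENNReal)) * eC
          + ((m : ENNReal) + ((2*N : ℕ) : ENNReal)) * eD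
          + (((2*N - 1 : ℕ) : ENNReal) + ((2*N : ℕ) : ENNReal)) * eE := by ring
      _ = (m : ENNReal) * eB + (n : ENNReal) * eC + (n : ENNReal) * eD
          + ((4*N - 1 : ℕ) : ENNReal) * eE := by
          rw [show ((m : ENNReal) + ((2*N : ℕ) : ENNReal)) = (n : ENNReal) by
              rw [← Nat.cast_add]; congr 1; omega,
            show (((2*N - 1 : ℕ) : ENNReal) + ((2*N : ℕ) : ENNReal))
                = ((4*N - 1 : ℕ) : ENNReal) by
              rw [← Nat.cast_add]; congr 1; omega]
  -- lower bound in ENNReal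
  have hLB : (m : ENNReal) * eB ≤ eA + ((n : ENNReal) * eC + (n : ENNReal) * eD) := by
    calc (m : ENNReal) * eB = ∑ _i ∈ Finset.range m, eB := by
          rw [Finset.sum_const, Finset.card_range, nsmul_eq_mul]
      _ ≤ ∑ i ∈ Finset.range m,
            (eVariationOn (Φ n) (Icc (α i) (α (i+1))) + (eC + eD)) := by
          refine Finset.sum_le_sum (fun i hi => ?_)
          refine le_trans (hmid i (Finset.mem_range.1 hi)).2 ?_
          gcongr
          · exact eVariationOn.mono φ (Icc_subset_Icc (hαIcc i).1 le_rfl)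
          · exact eVariationOn.mono φ (Icc_subset_Icc le_rfl (hαIcc (n+i)).2)
      _ = (∑ i ∈ Finset.range m, eVariationOn (Φ n) (Icc (α i) (α (i+1))))
          + (m : ENNReal) * (eC + eD) := by
          rw [Finset.sum_add_distrib, Finset.sum_const, Finset.card_range, nsmul_eq_mul]
      _ ≤ eA + (n : ENNReal) * (eC + eD) := by
          gcongr
          · rw [hS]
            exact eVariationOn.mono _ (Icc_subset_Icc (hαIcc 0).1 (hαIcc m).2)
          · exact Nat.cast_le.2 (by omega)
      _ = eA + ((n : ENNReal) * eC + (n : ENNReal) * eD) := by ring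
  -- finiteness
  have hfinsub : ∀ {u v : ℝ}, u ∈ Icc (0:ℝ) 1 → v ∈ Icc (0:ℝ) 1 →
      eVariationOn φ (Icc u v) ≠ ⊤ := fun hu hv =>
    ne_top_of_le_ne_top hbv (eVariationOn.mono φ (Icc_subset_Icc hu.1 hv.2))
  have hCfin : eC ≠ ⊤ := hfinsub h0mem (hαIcc m)
  have hDfin : eD ≠ ⊤ := hfinsub (hαIcc n) h1mem
  have hEfin : eE ≠ ⊤ := hfinsub (hαIcc m) (hαIcc n)
  have hBle : eB ≤ eE := by
    refine le_trans (hΦbound (2*N) (hαIcc m) (hαIcc (m+1)) (hαle (Nat.le_succ m))) ?_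
    have heq : ∑ k ∈ Finset.range (2*N),
        eVariationOn φ (Icc (f^[k] (α m)) (f^[k] (α (m+1))))
        = ∑ k ∈ Finset.range (2*N), eVariationOn φ (Icc (α (m+k)) (α (m+k+1))) := by
      refine Finset.sum_congr rfl (fun k _ => ?_)
      rw [hαshift, hαshift, show m + 1 + k = m + k + 1 from by omega]
    rw [heq, tele φ m (2*N), show m + 2*N = n from by omega]
  have hBfin : eB ≠ ⊤ := ne_top_of_le_ne_top hEfin hBle
  have hRHSfin : (m : ENNReal) * eB + (n : ENNReal) * eC + (n : ENNReal) * eD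
      + ((4*N - 1 : ℕ) : ENNReal) * eE ≠ ⊤ := by
    simp [ENNReal.add_ne_top, ENNReal.mul_ne_top, ENNReal.natCast_ne_top,
      hBfin, hCfin, hDfin, hEfin]
  have hAfin : eA ≠ ⊤ := ne_top_of_le_ne_top hRHSfin hUB
  have hRHSfin2 : eA + ((n : ENNReal) * eC + (n : ENNReal) * eD) ≠ ⊤ := by
    simp [ENNReal.add_ne_top, ENNReal.mul_ne_top, ENNReal.natCast_ne_top,
      hAfin, hCfin, hDfin]
  -- pass to real numbers
  have hmB : (m : ENNReal) * eB ≠ ⊤ := ENNReal.mul_ne_top (ENNReal.natCast_ne_top m) hBfin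
  have hnC : (n : ENNReal) * eC ≠ ⊤ := ENNReal.mul_ne_top (ENNReal.natCast_ne_top n) hCfin
  have hnD : (n : ENNReal) * eD ≠ ⊤ := ENNReal.mul_ne_top (ENNReal.natCast_ne_top n) hDfin
  have hE4 : ((4*N-1:ℕ) : ENNReal) * eE ≠ ⊤ :=
    ENNReal.mul_ne_top (ENNReal.natCast_ne_top _) hEfin
  have hUBr : eA.toReal ≤ (m : ℝ) * eB.toReal + (n : ℝ) * eC.toReal + (n : ℝ) * eD.toReal
      + ((4*N - 1 : ℕ) : ℝ) * eE.toReal := by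
    have h := ENNReal.toReal_mono hRHSfin hUB
    rw [ENNReal.toReal_add (ENNReal.add_ne_top.2 ⟨ENNReal.add_ne_top.2 ⟨hmB, hnC⟩, hnD⟩) hE4,
      ENNReal.toReal_add (ENNReal.add_ne_top.2 ⟨hmB, hnC⟩) hnD,
      ENNReal.toReal_add hmB hnC] at h
    simpa only [ENNReal.toReal_mul, ENNReal.toReal_natCast] using h
  have hLBr : (m : ℝ) * eB.toReal ≤ eA.toReal + ((n : ℝ) * eC.toReal + (n : ℝ) * eD.toReal) := by
    have h := ENNReal.toReal_mono hRHSfin2 hLB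
    rw [ENNReal.toReal_add hAfin (ENNReal.add_ne_top.2 ⟨hnC, hnD⟩),
      ENNReal.toReal_add hnC hnD] at h
    simpa only [ENNReal.toReal_mul, ENNReal.toReal_natCast] using h
  -- rewrite goal
  have hgoalA : varLogDOn (f^[n]) (Icc (0:ℝ) 1) = eA.toReal := by
    rw [varLogDOn, hEq n _ (subset_refl _)]
  have hgoalB : varLogDOn (f^[2*N]) (Icc (g^[N] p) (g^[N-1] p)) = eB.toReal := by
    rw [varLogDOn, ← hαm, ← hαm1,
      hEq (2*N) _ (Icc_subset_Icc (hαIcc m).1 (hαIcc (m+1)).2)]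
  have hgoalC : varLogDOn f (Icc 0 (g^[N] p)) = eC.toReal := by
    rw [varLogDOn, ← hαm]
  have hgoalD : varLogDOn f (Icc (f^[N] p) 1) = eD.toReal := by
    rw [varLogDOn, ← hαn]
  have hgoalE : varLogDOn f (Icc (g^[N] p) (f^[N] p)) = eE.toReal := by
    rw [varLogDOn, ← hαm, ← hαn]
  rw [hgoalA, hgoalB, hgoalC, hgoalD, hgoalE,
    show ((n : ℝ) - 2 * (N:ℝ)) = (m : ℝ) from by
      rw [show (n:ℝ) = ((2*N + m : ℕ) : ℝ) from by rw [← hnm]]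
      push_cast
      ring,
    abs_sub_le_iff]
  have hcast : ((4*N - 1 : ℕ) : ℝ) = 4*(N:ℝ) - 1 := by
    rw [Nat.cast_sub (by omega : 1 ≤ 4*N)]
    push_cast
    ring
  have hN1 : (1:ℝ) ≤ (N:ℝ) := by exact_mod_cast hN
  have hE0 : 0 ≤ eE.toReal := ENNReal.toReal_nonneg
  rw [hcast] at hUBr
  have hprod : 0 ≤ (4*(N:ℝ) - 1) * eE.toReal :=
    mul_nonneg (by linarith) hE0
  constructor
  · linarith
  · linarith
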